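/- Let φ be a unit vector in a finite-dimensional Hilbert space H, and φ⊥ a unit vector orthogonal to φ. Write a unit vector ψ = αφ + βφ⊥. Let Π_S be the orthogonal projection onto the permutation-symmetric subspace of H^{⊗(n+1)}. Then ⟨ψ ⊗ φ^{⊗n}, Π_S (ψ ⊗ φ^{⊗n})⟩ = |α|² + |β|²/(n+1). -/

import Mathlib

noncomputable section

/-- The `n`-fold tensor power `H^{⊗n}` of `H = ℂ^d`, realized concretely as
`EuclideanSpace ℂ (Fin n → Fin d)`. -/
abbrev TPow (d n : ℕ) := EuclideanSpace ℂ (Fin n → Fin d)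

/-- The permutation-symmetric subspace of `H^{⊗n}`: vectors invariant under all
permutations of the tensor factors. -/
def SymSub (d n : ℕ) : Submodule ℂ (TPow d n) where
  carrier := {v | ∀ σ : Equiv.Perm (Fin n), ∀ f : Fin n → Fin d, v (f ∘ σ) = v f}
  add_mem' := by
    intro a b ha hb σ f
    show a (f ∘ σ) + b (f ∘ σ) = a f + b f
    rw [ha σ f, hb σ f]
  zero_mem' := by intro σ f; rfl
  smul_mem' := by
    intro c v hv σ f
    show c * v (f ∘ σ) = c * v f
    rw [hv σ f]

/-- The state `ψ ⊗ φ^{⊗n}` in `H^{⊗(n+1)}`: `ψ` on factor `0`, `φ` on each of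
the remaining `n` factors. -/
def onePlusPow {d n : ℕ} (ψ φ : EuclideanSpace ℂ (Fin d)) : TPow d (n + 1) :=
  WithLp.toLp 2 (fun f => ψ (f 0) * ∏ i : Fin n, φ (f i.succ))

/-! Write `Φ = φ^{⊗(n+1)}` and `χₖ` for the product tensor with `φ⊥` in factor `k` and `φ`
elsewhere, so that `ψ ⊗ φ^{⊗n} = α Φ + β χ₀`. `Φ` is symmetric, and `Π_S χ₀ = (n+1)⁻¹ ∑ₖ χₖ`:
the right-hand side is symmetric, and a symmetric vector has the same inner product with
every `χₖ` since a transposition carries `χ₀` to `χₖ`. Orthonormality of `Φ, χ₀, …, χₙ` then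
gives the value. -/

open Function

section ElementaryTensors

variable {d m : ℕ}

def elemTensor (g : Fin m → EuclideanSpace ℂ (Fin d)) : TPow d m :=
  WithLp.toLp 2 (fun f => ∏ i, g i (f i))

lemma elemTensor_apply (g : Fin m → EuclideanSpace ℂ (Fin d)) (f : Fin m → Fin d) :
    elemTensor g f = ∏ i, g i (f i) := rfl

lemma inner_elemTensor (g h : Fin m → EuclideanSpace ℂ (Fin d)) :
    inner ℂ (elemTensor g) (elemTensor h) = ∏ i, inner ℂ (g i) (h i) := by
  simp only [PiLp.inner_apply, RCLike.inner_apply', elemTensor_apply, map_prod,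
    ← Finset.prod_mul_distrib]
  exact (Fintype.prod_sum fun i x => (starRingEnd ℂ) (g i x) * h i x).symm

lemma elemTensor_apply_comp (g : Fin m → EuclideanSpace ℂ (Fin d)) (σ : Equiv.Perm (Fin m))
    (f : Fin m → Fin d) : elemTensor g (f ∘ σ) = elemTensor (g ∘ σ.symm) f :=
  Fintype.prod_equiv σ _ _ fun i => by simp

lemma elemTensor_const_mem_symSub (φ : EuclideanSpace ℂ (Fin d)) :
    elemTensor (fun _ : Fin m => φ) ∈ SymSub d m :=
  fun σ f => elemTensor_apply_comp _ σ f

lemma inner_elemTensor_comp_of_mem_symSub {u : TPow d m} (hu : u ∈ SymSub d m)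
    (g : Fin m → EuclideanSpace ℂ (Fin d)) (σ : Equiv.Perm (Fin m)) :
    inner ℂ u (elemTensor (g ∘ σ)) = inner ℂ u (elemTensor g) := by
  simp only [PiLp.inner_apply, RCLike.inner_apply']
  refine Fintype.sum_equiv (Equiv.arrowCongr σ (Equiv.refl _)) _ _ fun f => ?_
  have hf : Equiv.arrowCongr σ (Equiv.refl _) f = f ∘ σ.symm := rfl
  rw [hf, hu σ.symm f, elemTensor_apply_comp, Equiv.symm_symm]

end ElementaryTensors

section SlotTensors

variable {d m : ℕ} (φ φp : EuclideanSpace ℂ (Fin d))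

def slotTensor (k : Fin m) : TPow d m :=
  elemTensor (update (fun _ => φ) k φp)

lemma elemTensor_update_comp (k : Fin m) (σ : Equiv.Perm (Fin m)) :
    elemTensor (update (fun _ => φ) k φp ∘ σ) = slotTensor φ φp (σ.symm k) := by
  rw [update_comp_equiv]; rfl

lemma sum_slotTensor_mem_symSub : ∑ k, slotTensor φ φp k ∈ SymSub d m := by
  intro σ f
  simp only [WithLp.ofLp_sum, Finset.sum_apply]
  refine Fintype.sum_equiv σ _ _ fun k => ?_
  rw [slotTensor, elemTensor_apply_comp, elemTensor_update_comp, Equiv.symm_symm]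

lemma inner_slotTensor_of_mem_symSub {u : TPow d m} (hu : u ∈ SymSub d m) (j k : Fin m) :
    inner ℂ u (slotTensor φ φp j) = inner ℂ u (slotTensor φ φp k) := by
  have hj : slotTensor φ φp j = elemTensor (update (fun _ => φ) k φp ∘ Equiv.swap j k) := by
    rw [elemTensor_update_comp, Equiv.symm_swap, Equiv.swap_apply_right]
  rw [hj, inner_elemTensor_comp_of_mem_symSub hu]
  rfl

lemma starProjection_slotTensor (k : Fin m) :
    (SymSub d m).starProjection (slotTensor φ φp k) = (m : ℂ)⁻¹ • ∑ j, slotTensor φ φp j := by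
  have hm : (m : ℂ) ≠ 0 := Nat.cast_ne_zero.mpr (Fin.pos k).ne'
  refine Submodule.eq_starProjection_of_mem_of_inner_eq_zero
    (Submodule.smul_mem _ _ (sum_slotTensor_mem_symSub φ φp)) fun u hu => ?_
  rw [inner_eq_zero_symm, inner_sub_right, inner_smul_right, inner_sum,
    Finset.sum_congr rfl fun j _ => inner_slotTensor_of_mem_symSub φ φp hu j k,
    Finset.sum_const, Finset.card_univ, Fintype.card_fin, nsmul_eq_mul, inv_mul_cancel_left₀ hm,
    sub_self]

variable {φ φp}

lemma inner_elemTensor_const_self (hφ : ‖φ‖ = 1) :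
    inner ℂ (elemTensor fun _ : Fin m => φ) (elemTensor fun _ => φ) = 1 := by
  rw [inner_elemTensor]
  simp [inner_self_eq_norm_sq_to_K, hφ]

lemma inner_elemTensor_const_slotTensor (horth : inner ℂ φ φp = 0) (k : Fin m) :
    inner ℂ (elemTensor fun _ => φ) (slotTensor φ φp k) = 0 :=
  (inner_elemTensor _ _).trans <| Finset.prod_eq_zero (Finset.mem_univ k) (by simpa)

lemma inner_slotTensor_elemTensor_const (horth : inner ℂ φp φ = 0) (k : Fin m) :
    inner ℂ (slotTensor φ φp k) (elemTensor fun _ => φ) = 0 :=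
  (inner_elemTensor _ _).trans <| Finset.prod_eq_zero (Finset.mem_univ k) (by simpa)

lemma inner_slotTensor_slotTensor (hφ : ‖φ‖ = 1) (hφp : ‖φp‖ = 1) (horth : inner ℂ φp φ = 0)
    (j k : Fin m) :
    inner ℂ (slotTensor φ φp j) (slotTensor φ φp k) = if j = k then 1 else 0 := by
  rw [slotTensor, slotTensor, inner_elemTensor]
  split_ifs with hjk
  · subst hjk
    refine Finset.prod_eq_one fun i _ => ?_
    rcases eq_or_ne i j with rfl | hij
    · simp [inner_self_eq_norm_sq_to_K, hφp]
    · simp [hij, inner_self_eq_norm_sq_to_K, hφ]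
  · exact Finset.prod_eq_zero (Finset.mem_univ j) (by simp [hjk, horth])

end SlotTensors

lemma onePlusPow_add_smul {d n : ℕ} (φ φp : EuclideanSpace ℂ (Fin d)) (α β : ℂ) :
    onePlusPow (n := n) (α • φ + β • φp) φ
      = α • elemTensor (fun _ => φ) + β • slotTensor φ φp 0 := by
  ext f
  simp only [onePlusPow, PiLp.add_apply, PiLp.smul_apply, elemTensor_apply, slotTensor,
    Fin.prod_univ_succ, update_self, ne_eq, Fin.succ_ne_zero, not_false_eq_true, update_of_ne,
    smul_eq_mul]
  ring

theorem stmt_13_general (d n : ℕ) (φ φp ψ : EuclideanSpace ℂ (Fin d)) (α β : ℂ)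
    (hφ : ‖φ‖ = 1) (hφp : ‖φp‖ = 1) (horth : inner ℂ φ φp = (0 : ℂ))
    (hψ : ψ = α • φ + β • φp) :
    inner ℂ (onePlusPow ψ φ)
        ((Submodule.orthogonalProjectionOnto (SymSub d (n + 1)) (onePlusPow ψ φ) : TPow d (n + 1)))
      = ((‖α‖ ^ 2 + ‖β‖ ^ 2 / (n + 1) : ℝ) : ℂ) := by
  have horth' : inner ℂ φp φ = 0 := inner_eq_zero_symm.mp horth
  rw [← Submodule.starProjection_apply, hψ, onePlusPow_add_smul, map_add, map_smul, map_smul,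
    Submodule.starProjection_eq_self_iff.mpr (elemTensor_const_mem_symSub φ),
    starProjection_slotTensor]
  simp only [inner_add_left, inner_add_right, inner_smul_left, inner_smul_right, inner_sum,
    inner_elemTensor_const_self hφ, inner_elemTensor_const_slotTensor horth,
    inner_slotTensor_elemTensor_const horth', inner_slotTensor_slotTensor hφ hφp horth',
    mul_zero, mul_one, add_zero, zero_add, mul_ite, Finset.sum_ite_eq, Finset.mem_univ,
    if_true, mul_left_comm β, Complex.mul_conj']
  push_cast
  ring

/-- For a unit vector `ψ = αφ + βφ⊥` and `Π_S` the orthogonal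
projection onto the symmetric subspace of `H^{⊗(n+1)}`,
`⟨ψ ⊗ φ^{⊗n}, Π_S (ψ ⊗ φ^{⊗n})⟩ = |α|² + |β|²/(n+1)`. -/
theorem stmt_13 (d n : ℕ) (φ φp ψ : EuclideanSpace ℂ (Fin d)) (α β : ℂ)
    (hφ : ‖φ‖ = 1) (hφp : ‖φp‖ = 1) (horth : inner ℂ φ φp = (0 : ℂ))
    (hψ : ψ = α • φ + β • φp) (hnorm : ‖α‖ ^ 2 + ‖β‖ ^ 2 = 1) :
    inner ℂ (onePlusPow ψ φ)
        ((Submodule.orthogonalProjectionOnto (SymSub d (n + 1)) (onePlusPow ψ φ) : TPow d (n + 1)))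
      = ((‖α‖ ^ 2 + ‖β‖ ^ 2 / (n + 1) : ℝ) : ℂ) :=
  stmt_13_general d n φ φp ψ α β hφ hφp horth hψ
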